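/- Fix σ > 1/2 and let g : ℝ → ℝ satisfy g(T) > T for all large T. Assume: (i) (quotient formula) ∫_T^{g(T)} |ζ(1/2+it)|² dt / ∫_T^{g(T)} |ζ(σ+it)|² dt = (1/ζ(2σ))·ln T + O(1) as T → ∞; (ii) (t_ν) is a Gram sequence satisfying the Titchmarsh-sum asymptotic. For positive integers x, y, z, n with n ≥ 3 set F = (xⁿ + yⁿ)/zⁿ and K_F = 4π⁵·F/(3·ζ(2σ)⁵), and let E(τ) = (1/τ)·(∫_{K_F·τ}^{g(K_F·τ)} |ζ(σ+it)|² dt)⁵ · (∫_{K_F·τ}^{g(K_F·τ)} |ζ(1/2+it)|² dt)^{−5} · Σ_{ν : K_F·τ ≤ t_ν ≤ 2·K_F·τ} |ζ(1/2 + i t_ν)|²·|ζ(1/2 + i t_{ν+1})|². Then the following are equivalent: (a) for all positive integers x, y, z, n with n ≥ 3, E(τ) does not converge to 1 as τ → ∞; (b) for all positive integers x, y, z, n with n ≥ 3, xⁿ + yⁿ ≠ zⁿ (the Fermat–Wiles theorem). -/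

import Mathlib

open Filter Topology MeasureTheory

/-- |ζ(σ+it)|² -/
noncomputable def zsq (σ : ℝ) (t : ℝ) : ℝ :=
  ‖riemannZeta (↑σ + ↑t * Complex.I)‖ ^ 2

/-- Riemann–Siegel theta function θ(t) = Im log Γ(1/4 + it/2) − (t/2)·ln π. -/
noncomputable def RStheta (t : ℝ) : ℝ :=
  (Complex.log (Complex.Gamma (1/4 + (↑t/2) * Complex.I))).im - (t/2) * Real.log Real.pi

/-- A Gram sequence: strictly increasing positive reals tending to ∞ with θ(t_ν) = π·ν. -/
def IsGramSeq (tν : ℕ → ℝ) : Prop :=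
  StrictMono tν ∧ (∀ ν : ℕ, 1 ≤ ν → 0 < tν ν) ∧ Filter.Tendsto tν Filter.atTop Filter.atTop ∧
    ∀ ν : ℕ, 1 ≤ ν → RStheta (tν ν) = Real.pi * ν

/-- Titchmarsh sum Σ_{T ≤ t_ν ≤ 2T} |ζ(1/2+it_ν)|²·|ζ(1/2+it_{ν+1})|². -/
noncomputable def TitchSum (tν : ℕ → ℝ) (T : ℝ) : ℝ :=
  ∑' ν : ℕ, if T ≤ tν ν ∧ tν ν ≤ 2 * T then zsq (1/2) (tν ν) * zsq (1/2) (tν (ν+1)) else 0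

/-- The Titchmarsh-sum asymptotic (Moser 1991):
Σ_{T ≤ t_ν ≤ 2T} |ζ(1/2+it_ν)|²|ζ(1/2+it_{ν+1})|² = (3/(4π⁵))·T·ln⁵T·(1+O(1/ln T)). -/
def TitchAsymp (tν : ℕ → ℝ) : Prop :=
  ∃ C : ℝ, ∀ᶠ T in Filter.atTop,
    |TitchSum tν T / (3 / (4 * Real.pi ^ 5) * T * Real.log T ^ 5) - 1| ≤ C / Real.log T


/-!
Under the two hypotheses the functional `E` attached to `F = (xⁿ + yⁿ)/zⁿ` tends to `F`
itself: the quotient formula makes the fifth power of the ratio of the two integrals behave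
like `ζ(2σ)⁵ / ln⁵ T`, which cancels the `T ln⁵ T` growth of the Titchmarsh sum, and the
constant `K_F` is chosen to leave exactly `F`. Hence `E → 1` iff `F = 1` iff `xⁿ + yⁿ = zⁿ`.
-/

lemma tendsto_one_of_abs_sub_one_le_div_log {f : ℝ → ℝ} {C : ℝ}
    (h : ∀ᶠ T in atTop, |f T - 1| ≤ C / Real.log T) :
    Tendsto f atTop (𝓝 1) := by
  have hC : Tendsto (fun T : ℝ => C / Real.log T) atTop (𝓝 0) :=
    tendsto_const_nhds.div_atTop Real.tendsto_log_atTop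
  rw [tendsto_iff_norm_sub_tendsto_zero]
  exact squeeze_zero' (Eventually.of_forall fun _ => norm_nonneg _) h hC

lemma tendsto_div_inv_mul_log_of_abs_sub_le {R : ℝ → ℝ} {c C : ℝ} (hc : 0 < c)
    (h : ∀ᶠ T in atTop, |R T - 1 / c * Real.log T| ≤ C) :
    Tendsto (fun T => R T / (1 / c * Real.log T)) atTop (𝓝 1) := by
  refine tendsto_one_of_abs_sub_one_le_div_log (C := C * c) ?_
  filter_upwards [h, Real.tendsto_log_atTop.eventually_gt_atTop 0] with T hT hL
  have hden : 0 < 1 / c * Real.log T := by positivity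
  calc |R T / (1 / c * Real.log T) - 1|
      = |R T - 1 / c * Real.log T| / (1 / c * Real.log T) := by
        rw [div_sub_one hden.ne', abs_div, abs_of_pos hden]
    _ ≤ C / (1 / c * Real.log T) := by gcongr
    _ = C * c / Real.log T := by field_simp

lemma tendsto_inv_mul_pow_mul_inv_pow_mul {u v S : ℝ → ℝ} {c K C C' : ℝ}
    (hc : 0 < c) (hK : 0 < K)
    (hq : ∀ᶠ T in atTop, |v T / u T - 1 / c * Real.log T| ≤ C)
    (hS : ∀ᶠ T in atTop,
      |S T / (3 / (4 * Real.pi ^ 5) * T * Real.log T ^ 5) - 1| ≤ C' / Real.log T) :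
    Tendsto (fun τ : ℝ => (1 / τ) * u (K * τ) ^ 5 * (v (K * τ) ^ 5)⁻¹ * S (K * τ)) atTop
      (𝓝 (3 / (4 * Real.pi ^ 5) * K * c ^ 5)) := by
  set a : ℝ := 3 / (4 * Real.pi ^ 5) with ha_def
  have ha : a ≠ 0 := by rw [ha_def]; positivity
  have hKτ : Tendsto (fun τ : ℝ => K * τ) atTop atTop := tendsto_id.const_mul_atTop hK
  have hratio : Tendsto (fun T => (1 / c * Real.log T) / (v T / u T)) atTop (𝓝 1) := by
    simpa only [inv_div, inv_one] using
      (tendsto_div_inv_mul_log_of_abs_sub_le hc hq).inv₀ one_ne_zero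
  have hsum : Tendsto (fun T => S T / (a * T * Real.log T ^ 5)) atTop (𝓝 1) :=
    tendsto_one_of_abs_sub_one_le_div_log hS
  have hlim := (((hratio.comp hKτ).pow 5).mul (hsum.comp hKτ)).mul_const (a * K * c ^ 5)
  rw [one_pow, one_mul, one_mul] at hlim
  refine hlim.congr' ?_
  filter_upwards [hKτ.eventually (Real.tendsto_log_atTop.eventually_gt_atTop 0),
    eventually_gt_atTop 0] with τ hL hτ
  simp only [Function.comp_apply]
  rcases eq_or_ne (u (K * τ)) 0 with hu | hu
  · simp [hu]
  rcases eq_or_ne (v (K * τ)) 0 with hv | hv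
  · simp [hv]
  field_simp

lemma fermat_quotient_eq_one_iff {x y z n : ℕ} (hz : 0 < z) :
    ((x : ℝ) ^ n + (y : ℝ) ^ n) / (z : ℝ) ^ n = 1 ↔ x ^ n + y ^ n = z ^ n := by
  rw [div_eq_one_iff_eq (by positivity)]
  norm_cast

theorem zeta_equivalent_FLT_first_general (σ : ℝ) (hσ : 1/2 < σ) (g : ℝ → ℝ)
    (hquot : ∃ C : ℝ, ∀ᶠ T in atTop,
      |(∫ t in T..(g T), zsq (1/2) t) / (∫ t in T..(g T), zsq σ t) -
        (1 / (riemannZeta (2 * (σ:ℂ))).re) * Real.log T| ≤ C)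
    (tν : ℕ → ℝ) (htitch : TitchAsymp tν) :
    ((∀ x y z n : ℕ, 0 < x → 0 < y → 0 < z → 3 ≤ n →
      ¬ Tendsto (fun τ : ℝ =>
        (1/τ) *
        ((∫ t in (4 * Real.pi ^ 5 * (((x:ℝ)^n + (y:ℝ)^n) / (z:ℝ)^n) / (3 * (riemannZeta (2 * (σ:ℂ))).re ^ 5) * τ)..(g (4 * Real.pi ^ 5 * (((x:ℝ)^n + (y:ℝ)^n) / (z:ℝ)^n) / (3 * (riemannZeta (2 * (σ:ℂ))).re ^ 5) * τ)), zsq σ t) ^ 5) *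
        (((∫ t in (4 * Real.pi ^ 5 * (((x:ℝ)^n + (y:ℝ)^n) / (z:ℝ)^n) / (3 * (riemannZeta (2 * (σ:ℂ))).re ^ 5) * τ)..(g (4 * Real.pi ^ 5 * (((x:ℝ)^n + (y:ℝ)^n) / (z:ℝ)^n) / (3 * (riemannZeta (2 * (σ:ℂ))).re ^ 5) * τ)), zsq (1/2) t) ^ 5)⁻¹) *
        TitchSum tν (4 * Real.pi ^ 5 * (((x:ℝ)^n + (y:ℝ)^n) / (z:ℝ)^n) / (3 * (riemannZeta (2 * (σ:ℂ))).re ^ 5) * τ))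
        atTop (nhds 1))
    ↔ (∀ x y z n : ℕ, 0 < x → 0 < y → 0 < z → 3 ≤ n → x^n + y^n ≠ z^n)) := by
  obtain ⟨C, hquot⟩ := hquot
  obtain ⟨C', htitch⟩ := htitch
  set c := (riemannZeta (2 * (σ:ℂ))).re
  have hc : 0 < c := by
    simpa [c] using riemannZeta_re_pos_of_one_lt (x := 2 * σ) (by linarith)
  refine forall₄_congr fun x y z n => imp_congr_right fun hx => imp_congr_right fun hy =>
    imp_congr_right fun hz => imp_congr_right fun _ => not_congr ?_
  set F : ℝ := ((x : ℝ) ^ n + (y : ℝ) ^ n) / (z : ℝ) ^ n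
  have hF : 0 < F := by positivity
  have hE := tendsto_inv_mul_pow_mul_inv_pow_mul (S := TitchSum tν)
    (K := 4 * Real.pi ^ 5 * F / (3 * c ^ 5)) hc (by positivity) hquot htitch
  rw [show 3 / (4 * Real.pi ^ 5) * (4 * Real.pi ^ 5 * F / (3 * c ^ 5)) * c ^ 5 = F by
    field_simp] at hE
  rw [← fermat_quotient_eq_one_iff hz]
  exact ⟨fun h => tendsto_nhds_unique hE h, fun h => h ▸ hE⟩

theorem zeta_equivalent_FLT_first (σ : ℝ) (hσ : 1/2 < σ) (g : ℝ → ℝ)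
    (hg : ∀ᶠ T in atTop, T < g T)
    (hquot : ∃ C : ℝ, ∀ᶠ T in atTop,
      |(∫ t in T..(g T), zsq (1/2) t) / (∫ t in T..(g T), zsq σ t) -
        (1 / (riemannZeta (2 * (σ:ℂ))).re) * Real.log T| ≤ C)
    (tν : ℕ → ℝ) (hgram : IsGramSeq tν) (htitch : TitchAsymp tν) :
    ((∀ x y z n : ℕ, 0 < x → 0 < y → 0 < z → 3 ≤ n →
      ¬ Tendsto (fun τ : ℝ =>
        (1/τ) *
        ((∫ t in (4 * Real.pi ^ 5 * (((x:ℝ)^n + (y:ℝ)^n) / (z:ℝ)^n) / (3 * (riemannZeta (2 * (σ:ℂ))).re ^ 5) * τ)..(g (4 * Real.pi ^ 5 * (((x:ℝ)^n + (y:ℝ)^n) / (z:ℝ)^n) / (3 * (riemannZeta (2 * (σ:ℂ))).re ^ 5) * τ)), zsq σ t) ^ 5) *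
        (((∫ t in (4 * Real.pi ^ 5 * (((x:ℝ)^n + (y:ℝ)^n) / (z:ℝ)^n) / (3 * (riemannZeta (2 * (σ:ℂ))).re ^ 5) * τ)..(g (4 * Real.pi ^ 5 * (((x:ℝ)^n + (y:ℝ)^n) / (z:ℝ)^n) / (3 * (riemannZeta (2 * (σ:ℂ))).re ^ 5) * τ)), zsq (1/2) t) ^ 5)⁻¹) *
        TitchSum tν (4 * Real.pi ^ 5 * (((x:ℝ)^n + (y:ℝ)^n) / (z:ℝ)^n) / (3 * (riemannZeta (2 * (σ:ℂ))).re ^ 5) * τ))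
        atTop (nhds 1))
    ↔ (∀ x y z n : ℕ, 0 < x → 0 < y → 0 < z → 3 ≤ n → x^n + y^n ≠ z^n)) :=
  zeta_equivalent_FLT_first_general σ hσ g hquot tν htitch
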